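/- Let h̃ ∈ ℝⁿ and define s ∈ ℝⁿ by sᵢ = sgn(h̃ᵢ), where sgn is the modified sign function (sgn(x) = -1 for x ≤ 0, sgn(x) = 1 for x > 0). Then s is the unique minimizer of h ↦ ⟨h, 1⟩ = Σᵢ hᵢ over the set {h ∈ [-1,1]ⁿ : ⟨h, h̃⟩ = ‖h̃‖₁}; that is, s belongs to this set, and every h in this set satisfies Σᵢ hᵢ ≥ Σᵢ sᵢ with equality only for h = s. -/

import Mathlib

/-! Since `|hᵢ| ≤ 1`, every term of `⟨h, h̃⟩` satisfies `hᵢ h̃ᵢ ≤ |h̃ᵢ|`, so `⟨h, h̃⟩ = ‖h̃‖₁` forces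
`hᵢ h̃ᵢ = |h̃ᵢ|` for each `i`. Where `h̃ᵢ > 0` this pins `hᵢ = 1 = sᵢ`; elsewhere `hᵢ ≥ -1 = sᵢ`.
Thus `s ≤ h` coordinatewise, which gives minimality, and equality of the sums forces `h = s`. -/

open Finset

noncomputable def msgn (x : ℝ) : ℝ := if x ≤ 0 then -1 else 1

lemma msgn_mul_self (x : ℝ) : msgn x * x = |x| := by
  unfold msgn
  split_ifs with hx
  · rw [abs_of_nonpos hx]; ring
  · rw [abs_of_pos (not_le.mp hx)]; ring

lemma neg_one_le_msgn (x : ℝ) : -1 ≤ msgn x := by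
  unfold msgn; split_ifs <;> norm_num

lemma msgn_le_one (x : ℝ) : msgn x ≤ 1 := by
  unfold msgn; split_ifs <;> norm_num

lemma mul_le_abs_of_abs_le_one {a : ℝ} (ha : |a| ≤ 1) (x : ℝ) : a * x ≤ |x| :=
  calc a * x ≤ |a| * |x| := (le_abs_self _).trans (abs_mul a x).le
    _ ≤ |x| := mul_le_of_le_one_left (abs_nonneg x) ha

lemma msgn_le_of_mul_eq_abs {a x : ℝ} (ha : -1 ≤ a) (hax : a * x = |x|) : msgn x ≤ a := by
  unfold msgn
  split_ifs with hx
  · exact ha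
  · have hx : 0 < x := not_le.mp hx
    rw [abs_of_pos hx] at hax
    exact (mul_eq_right₀ hx.ne').mp hax |>.ge

lemma msgn_le_of_sum_mul_eq_sum_abs {ι : Type*} [Fintype ι] {h x : ι → ℝ}
    (hb : ∀ i, -1 ≤ h i ∧ h i ≤ 1) (hsum : ∑ i, h i * x i = ∑ i, |x i|) (i : ι) :
    msgn (x i) ≤ h i := by
  have hle : ∀ j ∈ univ, h j * x j ≤ |x j| := fun j _ =>
    mul_le_abs_of_abs_le_one (abs_le.mpr (hb j)) (x j)
  have heq := (sum_eq_sum_iff_of_le hle).mp hsum i (mem_univ i)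
  exact msgn_le_of_mul_eq_abs (hb i).1 heq

/-- For `h̃ ∈ ℝⁿ`, the vector `s` with `sᵢ = sgn(h̃ᵢ)` (modified sign) is
the unique minimizer of `h ↦ Σᵢ hᵢ` over `{h ∈ [-1,1]ⁿ : ⟨h, h̃⟩ = ‖h̃‖₁}`: `s` belongs
to this set, and every `h` in the set satisfies `Σᵢ hᵢ ≥ Σᵢ sᵢ`, with equality only
for `h = s`. -/
theorem msgn_unique_minimizer (n : ℕ) (ht : Fin n → ℝ) (s : Fin n → ℝ)
    (hs : ∀ i, s i = msgn (ht i)) :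
    ((∀ i, -1 ≤ s i ∧ s i ≤ 1) ∧ (∑ i, s i * ht i) = ∑ i, |ht i|) ∧
    (∀ h : Fin n → ℝ, (∀ i, -1 ≤ h i ∧ h i ≤ 1) → (∑ i, h i * ht i) = (∑ i, |ht i|) →
      (∑ i, s i) ≤ (∑ i, h i) ∧ ((∑ i, h i) = (∑ i, s i) → h = s)) := by
  obtain rfl : s = fun i => msgn (ht i) := funext hs
  refine ⟨⟨fun i => ⟨neg_one_le_msgn _, msgn_le_one _⟩, sum_congr rfl fun i _ => msgn_mul_self _⟩,
    fun h hb hsum => ?_⟩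
  have hle : ∀ i ∈ univ, msgn (ht i) ≤ h i := fun i _ => msgn_le_of_sum_mul_eq_sum_abs hb hsum i
  refine ⟨sum_le_sum hle, fun heq => funext fun i => ?_⟩
  exact ((sum_eq_sum_iff_of_le hle).mp heq.symm i (mem_univ i)).symm
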